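/- arXiv:1711.01299 — 3 statements merged into one kernel-verified Lean document; each statement's English description precedes it below -/
import Mathlib

section
/- The training error of the AdaBoost ensemble is bounded by the product of the per-round normalization factors: (1/N)·|{i : y_i·F(x_i) ≤ 0}| ≤ Π_{t=1}^{T} Z_t, where F(x) = Σ_{t=1}^{T} α_t h_t(x). (This holds for arbitrary real coefficients α_t.) -/
/-- The training error of the AdaBoost ensemble is bounded by the product of the
per-round normalization factors:
`(1/N)·|{i : yᵢ·F(xᵢ) ≤ 0}| ≤ Π_{t=1}^{T} Z_t`, where `F(x) = Σ_t α_t·h_t(x)`.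
The weights satisfy `D_1(i) = 1/N` (indexed so `D 0 = D_1`) and
`D_{t+1}(i) = D_t(i)·exp(−α_t·yᵢ·h_t(xᵢ)) / Z_t` with
`Z_t = Σᵢ D_t(i)·exp(−α_t·yᵢ·h_t(xᵢ))`.  This holds for arbitrary real `α_t`. -/
theorem adaboost_training_error_le_prod {X : Type*} (N T : ℕ) (hN : 0 < N)
    (x : Fin N → X) (y : Fin N → ℝ) (hy : ∀ i, y i = 1 ∨ y i = -1)
    (h : Fin T → X → ℝ) (hh : ∀ t x', h t x' = 1 ∨ h t x' = -1)
    (α : Fin T → ℝ) (D : ℕ → Fin N → ℝ) (Z : Fin T → ℝ)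
    (hD0 : ∀ i, D 0 i = 1 / N)
    (hZ : ∀ t : Fin T, Z t = ∑ i, D t.1 i * Real.exp (-(α t * y i * h t (x i))))
    (hrec : ∀ (t : Fin T) (i : Fin N),
      D (t.1 + 1) i = D t.1 i * Real.exp (-(α t * y i * h t (x i))) / Z t) :
    (1 / N : ℝ) *
        (Finset.univ.filter
          (fun i => y i * ∑ t, α t * h t (x i) ≤ 0)).card ≤
      ∏ t, Z t := by
  have hNpos : (0:ℝ) < N := by exact_mod_cast hN
  -- positivity of D t i for t ≤ T
  have hpos : ∀ t, t ≤ T → ∀ i, 0 < D t i := by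
    intro t
    induction t with
    | zero => intro _ i; rw [hD0]; positivity
    | succ t ih =>
      intro ht i
      have ht' : t < T := ht
      have ihp := ih (le_of_lt ht')
      have hZpos : 0 < Z ⟨t, ht'⟩ := by
        rw [hZ ⟨t, ht'⟩]
        apply Finset.sum_pos
        · intro j _; exact mul_pos (ihp j) (Real.exp_pos _)
        · exact ⟨i, Finset.mem_univ i⟩
      rw [hrec ⟨t, ht'⟩ i]
      exact div_pos (mul_pos (ihp i) (Real.exp_pos _)) hZpos
  have hZpos : ∀ t : Fin T, 0 < Z t := by
    intro t
    rw [hZ t]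
    apply Finset.sum_pos
    · intro j _; exact mul_pos (hpos t.1 (le_of_lt t.2) j) (Real.exp_pos _)
    · exact ⟨⟨0, hN⟩, Finset.mem_univ _⟩
  -- key unrolling identity
  have key : ∀ t, t ≤ T → ∀ i,
      D t i * ∏ s ∈ Finset.univ.filter (fun s : Fin T => s.1 < t), Z s
        = (1 / N) * Real.exp (-(y i *
            ∑ s ∈ Finset.univ.filter (fun s : Fin T => s.1 < t), α s * h s (x i))) := by
    intro t
    induction t with
    | zero =>
      intro _ i
      have : Finset.univ.filter (fun s : Fin T => s.1 < 0) = ∅ := by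
        apply Finset.filter_false_of_mem; intro s _; omega
      simp [this, hD0]
    | succ t ih =>
      intro ht i
      have ht' : t < T := ht
      set t' : Fin T := ⟨t, ht'⟩
      have hset : Finset.univ.filter (fun s : Fin T => s.1 < t + 1)
          = insert t' (Finset.univ.filter (fun s : Fin T => s.1 < t)) := by
        ext s
        simp only [Finset.mem_filter, Finset.mem_univ, true_and, Finset.mem_insert]
        constructor
        · intro hs
          rcases Nat.lt_succ_iff_lt_or_eq.mp hs with h1 | h1
          · exact Or.inr h1
          · exact Or.inl (Fin.ext h1)
        · rintro (rfl | hs)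
          · exact Nat.lt_succ_self t
          · omega
      have hnotmem : t' ∉ Finset.univ.filter (fun s : Fin T => s.1 < t) := by
        simp [t']
      rw [hset, Finset.prod_insert hnotmem, Finset.sum_insert hnotmem,
        hrec t' i]
      have hZne : Z t' ≠ 0 := ne_of_gt (hZpos t')
      have ihe := ih (le_of_lt ht') i
      have step : D t i * Real.exp (-(α t' * y i * h t' (x i))) / Z t' * (Z t' *
          ∏ s ∈ Finset.univ.filter (fun s : Fin T => s.1 < t), Z s)
          = (D t i * ∏ s ∈ Finset.univ.filter (fun s : Fin T => s.1 < t), Z s) *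
            Real.exp (-(α t' * y i * h t' (x i))) := by
        field_simp
      rw [step, ihe, mul_assoc, ← Real.exp_add]
      congr 2
      ring
  -- sum of D T over all i equals 1
  have hsum : ∀ t, t ≤ T → ∑ i, D t i = 1 := by
    intro t
    induction t with
    | zero =>
      intro _
      simp only [hD0]
      rw [Finset.sum_const, Finset.card_univ, Fintype.card_fin, nsmul_eq_mul]
      field_simp
    | succ t ih =>
      intro ht
      have ht' : t < T := ht
      have : ∀ i : Fin N, D (t+1) i = D t i * Real.exp (-(α ⟨t,ht'⟩ * y i * h ⟨t,ht'⟩ (x i))) / Z ⟨t,ht'⟩ := fun i => hrec ⟨t,ht'⟩ i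
      simp only [this]
      rw [← Finset.sum_div, ← hZ ⟨t,ht'⟩, div_self (ne_of_gt (hZpos ⟨t,ht'⟩))]
  -- at t = T the filter is univ
  have hfull : Finset.univ.filter (fun s : Fin T => s.1 < T) = Finset.univ := by
    apply Finset.filter_true_of_mem; intro s _; exact s.2
  have keyT : ∀ i, (1 / N : ℝ) * Real.exp (-(y i * ∑ t, α t * h t (x i)))
      = D T i * ∏ t, Z t := by
    intro i
    have hk := key T le_rfl i
    rw [hfull] at hk
    exact hk.symm
  -- final bound
  have hsumexp : ∑ i, (1 / N : ℝ) * Real.exp (-(y i * ∑ t, α t * h t (x i))) = ∏ t, Z t := by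
    simp only [keyT]
    rw [← Finset.sum_mul, hsum T le_rfl, one_mul]
  rw [← hsumexp]
  have hcard : ((Finset.univ.filter
      (fun i => y i * ∑ t, α t * h t (x i) ≤ 0)).card : ℝ)
      = ∑ i, (if y i * ∑ t, α t * h t (x i) ≤ 0 then (1:ℝ) else 0) := by
    rw [Finset.sum_boole]
  rw [hcard, Finset.mul_sum]
  apply Finset.sum_le_sum
  intro i _
  by_cases hc : y i * ∑ t, α t * h t (x i) ≤ 0
  · simp only [hc, if_true, mul_one]
    have : (1:ℝ) ≤ Real.exp (-(y i * ∑ t, α t * h t (x i))) :=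
      Real.one_le_exp (by linarith)
    have h1 : (0:ℝ) < 1 / N := by positivity
    nlinarith
  · simp only [hc, if_false, mul_zero]
    positivity
end

section
/- Refined AdaBoost training error bound: if on every round t = 1,…,T the weighted error satisfies ε_t = 1/2 − γ_t with γ_t ∈ [0, 1/2) (and ε_t > 0), then the fraction of training examples misclassified by the boosted classifier satisfies (1/N)·|{i : y_i·F(x_i) ≤ 0}| ≤ exp(−2·Σ_{t=1}^{T} γ_t²), where F(x) = Σ_{t=1}^{T} α_t h_t(x). -/
/-- Refined AdaBoost training error bound: if on every round `t` the weighted error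
satisfies `ε_t = 1/2 − γ_t` with `γ_t ∈ [0, 1/2)` (and `ε_t > 0`), then the fraction
of training examples misclassified by the boosted classifier satisfies
`(1/N)·|{i : yᵢ·F(xᵢ) ≤ 0}| ≤ exp(−2·Σ_t γ_t²)`, where `F(x) = Σ_t α_t·h_t(x)`.
Setting: labels `yᵢ ∈ {−1,+1}`, weak hypotheses `h_t : X → {−1,+1}`, weights
`D_1(i) = 1/N` (indexed so `D 0 = D_1`),
`D_{t+1}(i) = D_t(i)·exp(−α_t·yᵢ·h_t(xᵢ))/Z_t` with
`Z_t = Σᵢ D_t(i)·exp(−α_t·yᵢ·h_t(xᵢ))`, weighted error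
`ε_t = Σ_{i : h_t(xᵢ) ≠ yᵢ} D_t(i)`, coefficient `α_t = (1/2)·ln((1−ε_t)/ε_t)`,
and edge `γ_t = 1/2 − ε_t`. -/
theorem adaboost_refined_error_bound {X : Type*} (N T : ℕ) (hN : 0 < N)
    (x : Fin N → X) (y : Fin N → ℝ) (hy : ∀ i, y i = 1 ∨ y i = -1)
    (h : Fin T → X → ℝ) (hh : ∀ t x', h t x' = 1 ∨ h t x' = -1)
    (α ε γ : Fin T → ℝ) (D : ℕ → Fin N → ℝ) (Z : Fin T → ℝ)
    (hD0 : ∀ i, D 0 i = 1 / N)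
    (hZ : ∀ t : Fin T, Z t = ∑ i, D t.1 i * Real.exp (-(α t * y i * h t (x i))))
    (hrec : ∀ (t : Fin T) (i : Fin N),
      D (t.1 + 1) i = D t.1 i * Real.exp (-(α t * y i * h t (x i))) / Z t)
    (hε : ∀ t : Fin T,
      ε t = ∑ i ∈ Finset.univ.filter (fun i => h t (x i) ≠ y i), D t.1 i)
    (hα : ∀ t, α t = (1 / 2) * Real.log ((1 - ε t) / ε t))
    (hγ : ∀ t, γ t = 1 / 2 - ε t)
    (hγ0 : ∀ t, 0 ≤ γ t) (hγ1 : ∀ t, γ t < 1 / 2) (hε0 : ∀ t, 0 < ε t) :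
    (1 / N : ℝ) *
        (Finset.univ.filter
          (fun i => y i * ∑ t, α t * h t (x i) ≤ 0)).card ≤
      Real.exp (-2 * ∑ t, γ t ^ 2) := by
  classical
  have hNpos : (0:ℝ) < N := by exact_mod_cast hN
  have hNe : Nonempty (Fin N) := ⟨⟨0, hN⟩⟩
  have hεhalf : ∀ t, ε t ≤ 1/2 := fun t => by have h1 := hγ0 t; rw [hγ t] at h1; linarith
  have hε1 : ∀ t, (0:ℝ) < 1 - ε t := fun t => by have := hεhalf t; linarith
  -- values of y*h
  have hyh : ∀ (t : Fin T) (i : Fin N),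
      (h t (x i) = y i ∧ y i * h t (x i) = 1) ∨ (h t (x i) ≠ y i ∧ y i * h t (x i) = -1) := by
    intro t i
    rcases hy i with hy1 | hy1 <;> rcases hh t (x i) with hh1 | hh1 <;>
      simp [hy1, hh1] <;> norm_num
  -- D is positive and sums to 1
  have hDkey : ∀ n, n ≤ T → (∀ i, 0 < D n i) ∧ (∑ i, D n i = 1) := by
    intro n
    induction n with
    | zero =>
      intro _
      refine ⟨fun i => by rw [hD0]; positivity, ?_⟩
      simp only [hD0, Finset.sum_const, Finset.card_univ, Fintype.card_fin, nsmul_eq_mul]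
      field_simp
    | succ n ih =>
      intro hn
      have hn' : n < T := hn
      obtain ⟨hpos, hsum⟩ := ih hn'.le
      set tn : Fin T := ⟨n, hn'⟩ with htn
      have hZpos : 0 < Z tn := by
        rw [hZ]
        exact Finset.sum_pos (fun i _ => mul_pos (hpos i) (Real.exp_pos _))
          Finset.univ_nonempty
      constructor
      · intro i
        have hr := hrec tn i
        simp only [htn] at hr
        rw [hr]
        exact div_pos (mul_pos (hpos i) (Real.exp_pos _)) hZpos
      · have : ∀ i : Fin N, D (n+1) i = D n i * Real.exp (-(α tn * y i * h tn (x i))) / Z tn := by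
          intro i; have hr := hrec tn i; simpa using hr
        rw [Finset.sum_congr rfl (fun i _ => this i), ← Finset.sum_div, ← hZ tn,
          div_self hZpos.ne']
  -- Z value
  have hZval : ∀ t : Fin T, Z t = 2 * Real.sqrt (ε t * (1 - ε t)) := by
    intro t
    obtain ⟨hpos, hsum⟩ := hDkey t.1 t.2.le
    have hcor : ∑ i ∈ Finset.univ.filter (fun i => h t (x i) = y i), D t.1 i = 1 - ε t := by
      have hsplit := Finset.sum_filter_add_sum_filter_not Finset.univ
        (fun i => h t (x i) = y i) (fun i => D t.1 i)
      rw [hsum] at hsplit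
      have : ∑ i ∈ Finset.univ.filter (fun i => ¬ h t (x i) = y i), D t.1 i = ε t := by
        rw [hε t]
      linarith
    have hsq : (0:ℝ) < (1 - ε t) / ε t := div_pos (hε1 t) (hε0 t)
    have hexp : Real.exp (α t) = Real.sqrt (1 - ε t) / Real.sqrt (ε t) := by
      rw [hα t, mul_comm, ← div_eq_mul_one_div, Real.exp_half, Real.exp_log hsq,
        Real.sqrt_div (hε1 t).le]
    have hexp' : Real.exp (-(α t)) = Real.sqrt (ε t) / Real.sqrt (1 - ε t) := by
      rw [Real.exp_neg, hexp, inv_div]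
    have hZs : Z t = (∑ i ∈ Finset.univ.filter (fun i => h t (x i) = y i), D t.1 i)
          * Real.exp (-(α t))
        + (∑ i ∈ Finset.univ.filter (fun i => ¬ h t (x i) = y i), D t.1 i)
          * Real.exp (α t) := by
      rw [hZ t, ← Finset.sum_filter_add_sum_filter_not Finset.univ
        (fun i => h t (x i) = y i) (fun i => D t.1 i * Real.exp (-(α t * y i * h t (x i)))),
        Finset.sum_mul, Finset.sum_mul]
      congr 1
      · refine Finset.sum_congr rfl (fun i hi => ?_)
        simp only [Finset.mem_filter] at hi
        rcases hyh t i with ⟨_, hv⟩ | ⟨hne, _⟩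
        · rw [mul_assoc, hv, mul_one]
        · exact absurd hi.2 hne
      · refine Finset.sum_congr rfl (fun i hi => ?_)
        simp only [Finset.mem_filter] at hi
        rcases hyh t i with ⟨heq, _⟩ | ⟨_, hv⟩
        · exact absurd heq hi.2
        · rw [mul_assoc, hv, mul_neg_one, neg_neg]
    have hεs : ∑ i ∈ Finset.univ.filter (fun i => ¬ h t (x i) = y i), D t.1 i = ε t := by
      rw [hε t]
    rw [hZs, hcor, hεs, hexp, hexp']
    have ha : Real.sqrt (ε t) > 0 := Real.sqrt_pos.2 (hε0 t)
    have hb : Real.sqrt (1 - ε t) > 0 := Real.sqrt_pos.2 (hε1 t)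
    have ha2 : Real.sqrt (ε t) ^ 2 = ε t := Real.sq_sqrt (hε0 t).le
    have hb2 : Real.sqrt (1 - ε t) ^ 2 = 1 - ε t := Real.sq_sqrt (hε1 t).le
    rw [Real.sqrt_mul (hε0 t).le]
    field_simp
    nlinarith [ha2, hb2, ha, hb]
  -- Z bound
  have hZle : ∀ t : Fin T, Z t ≤ Real.exp (-2 * γ t ^ 2) := by
    intro t
    rw [hZval t]
    have h4 : 4 * (ε t * (1 - ε t)) = 1 - 4 * γ t ^ 2 := by rw [hγ t]; ring
    have h2 : 2 * Real.sqrt (ε t * (1 - ε t)) = Real.sqrt (1 - 4 * γ t ^ 2) := by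
      rw [← h4, show (4:ℝ) * (ε t * (1 - ε t)) = 2^2 * (ε t * (1 - ε t)) by ring,
        Real.sqrt_mul (by norm_num : (0:ℝ) ≤ 2^2) (ε t * (1 - ε t)),
        Real.sqrt_sq (by norm_num : (0:ℝ) ≤ 2)]
    rw [h2]
    have hle : 1 - 4 * γ t ^ 2 ≤ Real.exp (-(4 * γ t ^ 2)) := by
      have := Real.add_one_le_exp (-(4 * γ t ^ 2))
      linarith
    calc Real.sqrt (1 - 4 * γ t ^ 2) ≤ Real.sqrt (Real.exp (-(4 * γ t ^ 2))) :=
          Real.sqrt_le_sqrt hle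
      _ = Real.exp (-2 * γ t ^ 2) := by
          rw [← Real.exp_half]; ring_nf
  have hZnn : ∀ t : Fin T, 0 ≤ Z t := fun t => by rw [hZval t]; positivity
  -- telescoping
  have htel : ∀ n, n ≤ T → ∀ i,
      (∏ t ∈ Finset.univ.filter (fun t : Fin T => t.1 < n), Z t) * D n i
        = (1/N) * Real.exp (-(y i * ∑ t ∈ Finset.univ.filter (fun t : Fin T => t.1 < n),
            α t * h t (x i))) := by
    intro n
    induction n with
    | zero => intro _ i; simp [hD0]
    | succ n ih =>
      intro hn i
      have hn' : n < T := hn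
      set tn : Fin T := ⟨n, hn'⟩ with htn
      have hZpos : 0 < Z tn := by
        obtain ⟨hpos, _⟩ := hDkey n hn'.le
        rw [hZ]
        exact Finset.sum_pos (fun i _ => mul_pos (hpos i) (Real.exp_pos _))
          Finset.univ_nonempty
      have hset : Finset.univ.filter (fun t : Fin T => t.1 < n+1)
          = insert tn (Finset.univ.filter (fun t : Fin T => t.1 < n)) := by
        ext s
        simp only [Finset.mem_insert, Finset.mem_filter, Finset.mem_univ, true_and, htn,
          Fin.ext_iff]
        omega
      have hnot : tn ∉ Finset.univ.filter (fun t : Fin T => t.1 < n) := by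
        simp [htn]
      rw [hset, Finset.prod_insert hnot, Finset.sum_insert hnot]
      have hr : D (n+1) i = D n i * Real.exp (-(α tn * y i * h tn (x i))) / Z tn := by
        have := hrec tn i; simpa using this
      rw [hr]
      rw [show Z tn * (∏ t ∈ Finset.univ.filter (fun t : Fin T => t.1 < n), Z t)
            * (D n i * Real.exp (-(α tn * y i * h tn (x i))) / Z tn)
          = ((∏ t ∈ Finset.univ.filter (fun t : Fin T => t.1 < n), Z t) * D n i)
            * Real.exp (-(α tn * y i * h tn (x i))) from by
        field_simp]
      rw [ih hn'.le i, mul_assoc, ← Real.exp_add]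
      congr 2
      ring
  -- final chain
  obtain ⟨hTpos, hTsum⟩ := hDkey T le_rfl
  have hfilT : Finset.univ.filter (fun t : Fin T => t.1 < T) = Finset.univ := by
    refine Finset.filter_true_of_mem (fun t _ => t.2)
  have hexpF : ∀ i, Real.exp (-(y i * ∑ t, α t * h t (x i)))
      = (∏ t, Z t) * (N * D T i) := by
    intro i
    have := htel T le_rfl i
    rw [hfilT] at this
    have hx : Real.exp (-(y i * ∑ t, α t * h t (x i))) = N * ((∏ t, Z t) * D T i) := by
      rw [this]; field_simp
    rw [hx]; ring
  have hsumexp : ∑ i, Real.exp (-(y i * ∑ t, α t * h t (x i))) = N * ∏ t, Z t := by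
    rw [Finset.sum_congr rfl (fun i _ => hexpF i)]
    rw [← Finset.mul_sum, ← Finset.mul_sum, hTsum]
    ring
  set S := Finset.univ.filter (fun i : Fin N => y i * ∑ t, α t * h t (x i) ≤ 0) with hS
  have hcard : (S.card : ℝ) ≤ ∑ i, Real.exp (-(y i * ∑ t, α t * h t (x i))) := by
    calc (S.card : ℝ) = ∑ i ∈ S, (1:ℝ) := by simp
      _ ≤ ∑ i ∈ S, Real.exp (-(y i * ∑ t, α t * h t (x i))) := by
          refine Finset.sum_le_sum (fun i hi => ?_)
          rw [hS, Finset.mem_filter] at hi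
          rw [show (1:ℝ) = Real.exp 0 from (Real.exp_zero).symm]
          exact Real.exp_le_exp.2 (by linarith [hi.2])
      _ ≤ ∑ i, Real.exp (-(y i * ∑ t, α t * h t (x i))) :=
          Finset.sum_le_sum_of_subset_of_nonneg (Finset.filter_subset _ _)
            (fun i _ _ => (Real.exp_pos _).le)
  have hprodle : (∏ t, Z t) ≤ Real.exp (-2 * ∑ t, γ t ^ 2) := by
    calc (∏ t, Z t) ≤ ∏ t, Real.exp (-2 * γ t ^ 2) :=
          Finset.prod_le_prod (fun t _ => hZnn t) (fun t _ => hZle t)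
      _ = Real.exp (∑ t, -2 * γ t ^ 2) := (Real.exp_sum _ _).symm
      _ = Real.exp (-2 * ∑ t, γ t ^ 2) := by rw [← Finset.mul_sum]
  calc (1 / N : ℝ) * S.card ≤ (1 / N) * (N * ∏ t, Z t) := by
        rw [← hsumexp]
        exact mul_le_mul_of_nonneg_left hcard (by positivity)
    _ = ∏ t, Z t := by field_simp
    _ ≤ Real.exp (-2 * ∑ t, γ t ^ 2) := hprodle
end

section
/- Perfect classification after enough rounds: in the AdaBoost setting with a uniform edge, if every round's weighted error satisfies ε_t ≤ 1/2 − γ for a fixed γ ∈ (0, 1/2) (and each ε_t ∈ (0,1)), and the number of rounds satisfies T > ln(N) / (2γ²), then the boosted classifier classifies every training example correctly, i.e., y_i·F(x_i) > 0 for all i = 1,…,N, where F(x) = Σ_{t=1}^{T} α_t h_t(x). -/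
/-! Unrolling the reweighting gives `D_T(i) · ∏ₜ Z_t = exp(-yᵢ F(xᵢ)) / N`, and
`D_T(i) ≤ 1` because `D_T` is a probability vector. Splitting `Z_t` over correctly and
wrongly classified examples and substituting `α_t` gives
`Z_t = 2√(ε_t(1 - ε_t)) ≤ exp(-2γ²)`, so `∏ₜ Z_t ≤ exp(-2γ²T) < 1/N`.
Hence `exp(-yᵢ F(xᵢ)) < 1`, i.e. `yᵢ F(xᵢ) > 0`. -/

open Real Finset

section Reweighting

variable {ι : Type*}

theorem weight_pos [Fintype ι] {T : ℕ} (D : ℕ → ι → ℝ) (Z : Fin T → ℝ)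
    (u : Fin T → ι → ℝ)
    (hZ : ∀ t, Z t = ∑ i, D t i * exp (-u t i))
    (hrec : ∀ (t : Fin T) i, D (t.1 + 1) i = D t i * exp (-u t i) / Z t)
    (h0 : ∀ i, 0 < D 0 i) : ∀ t ≤ T, ∀ i, 0 < D t i := by
  intro t
  induction t with
  | zero => exact fun _ => h0
  | succ t ih =>
    intro ht i
    have hDt := ih (by omega)
    have hZt : 0 < Z ⟨t, ht⟩ := by
      rw [hZ]
      exact sum_pos (fun j _ => mul_pos (hDt j) (exp_pos _)) ⟨i, mem_univ i⟩
    rw [hrec ⟨t, ht⟩]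
    exact div_pos (mul_pos (hDt i) (exp_pos _)) hZt

theorem sum_weight_eq_one [Fintype ι] {T : ℕ} (D : ℕ → ι → ℝ) (Z : Fin T → ℝ)
    (u : Fin T → ι → ℝ)
    (hZ : ∀ t, Z t = ∑ i, D t i * exp (-u t i))
    (hrec : ∀ (t : Fin T) i, D (t.1 + 1) i = D t i * exp (-u t i) / Z t)
    (hZne : ∀ t, Z t ≠ 0) (h0 : ∑ i, D 0 i = 1) : ∀ t ≤ T, ∑ i, D t i = 1
  | 0, _ => h0
  | t + 1, ht => by
    rw [sum_congr rfl fun i _ => hrec ⟨t, ht⟩ i, ← sum_div, ← hZ, div_self (hZne _)]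

theorem weight_mul_prod_normalizer_eq {T : ℕ} (D : ℕ → ι → ℝ) (Z : Fin T → ℝ)
    (u : Fin T → ι → ℝ) (hZne : ∀ t, Z t ≠ 0)
    (hrec : ∀ (t : Fin T) i, D (t.1 + 1) i = D t i * exp (-u t i) / Z t) (i : ι) :
    D T i * ∏ t, Z t = D 0 i * exp (-∑ t, u t i) := by
  induction T with
  | zero => simp
  | succ T ih =>
    have hlast := hrec (Fin.last T) i
    rw [Fin.val_last] at hlast
    have hprev := ih (fun t => Z t.castSucc) (fun t => u t.castSucc) (fun t => hZne _)
      (fun t i => hrec t.castSucc i)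
    rw [Fin.prod_univ_castSucc, Fin.sum_univ_castSucc, hlast]
    calc D T i * exp (-u (Fin.last T) i) / Z (Fin.last T) *
          ((∏ t : Fin T, Z t.castSucc) * Z (Fin.last T))
        = (D T i * ∏ t : Fin T, Z t.castSucc) * exp (-u (Fin.last T) i) := by
          field_simp [hZne (Fin.last T)]
      _ = _ := by rw [hprev, neg_add, exp_add, mul_assoc]

theorem sum_mul_exp_neg_mul_sign_eq [Fintype ι] (w y g : ι → ℝ)
    (hy : ∀ i, y i = 1 ∨ y i = -1)
    (hg : ∀ i, g i = 1 ∨ g i = -1) (hw : ∑ i, w i = 1) (α : ℝ) :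
    ∑ i, w i * exp (-(α * y i * g i)) =
      (1 - ∑ i ∈ univ.filter (fun i => g i ≠ y i), w i) * exp (-α) +
        (∑ i ∈ univ.filter (fun i => g i ≠ y i), w i) * exp α := by
  have hagree : ∀ i ∈ univ.filter (fun i => ¬ g i ≠ y i),
      w i * exp (-(α * y i * g i)) = w i * exp (-α) := by
    intro i hi
    rw [mem_filter, not_not] at hi
    rw [hi.2]
    rcases hy i with h | h <;> simp [h]
  have hdisagree : ∀ i ∈ univ.filter (fun i => g i ≠ y i),
      w i * exp (-(α * y i * g i)) = w i * exp α := by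
    intro i hi
    rw [mem_filter] at hi
    rcases hy i with h | h <;> rcases hg i with h' | h' <;> simp_all
  have hsplit := sum_filter_add_sum_filter_not univ (fun i => g i ≠ y i) w
  rw [hw] at hsplit
  rw [← sum_filter_add_sum_filter_not univ (fun i => g i ≠ y i), sum_congr rfl hagree,
    sum_congr rfl hdisagree, ← sum_mul, ← sum_mul]
  linear_combination exp (-α) * hsplit

end Reweighting

theorem one_sub_mul_exp_neg_add_mul_exp_eq_two_mul_sqrt {ε : ℝ} (h0 : 0 < ε) (h1 : ε < 1) :
    (1 - ε) * exp (-(1 / 2 * log ((1 - ε) / ε))) + ε * exp (1 / 2 * log ((1 - ε) / ε)) =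
      2 * √(ε * (1 - ε)) := by
  have h1' : 0 < 1 - ε := by linarith
  rw [show 1 / 2 * log ((1 - ε) / ε) = log ((1 - ε) / ε) / 2 by ring, exp_neg, exp_half,
    exp_log (div_pos h1' h0), sqrt_div' _ h0.le, sqrt_mul h0.le]
  field_simp
  rw [sq_sqrt h0.le, sq_sqrt h1'.le]
  ring

theorem two_mul_sqrt_mul_one_sub_le_exp {ε γ : ℝ} (hγ : 0 ≤ γ) (hε : ε ≤ 1 / 2 - γ) :
    2 * √(ε * (1 - ε)) ≤ exp (-(2 * γ ^ 2)) := by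
  have hexp : 1 - 4 * γ ^ 2 ≤ exp (-(2 * γ ^ 2)) ^ 2 := by
    rw [← exp_nat_mul, show ((2 : ℕ) : ℝ) * -(2 * γ ^ 2) = -(4 * γ ^ 2) by ring]
    linarith [add_one_le_exp (-(4 * γ ^ 2))]
  have hgap : 4 * γ ^ 2 ≤ (1 - 2 * ε) ^ 2 := by nlinarith
  rw [← le_div_iff₀' two_pos, sqrt_le_left (by positivity)]
  nlinarith

theorem exp_neg_two_mul_sq_pow_lt_one_div {n γ : ℝ} {T : ℕ} (hn : 0 < n) (hγ : 0 < γ)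
    (hT : log n / (2 * γ ^ 2) < T) : exp (-(2 * γ ^ 2)) ^ T < 1 / n := by
  rw [← exp_nat_mul, one_div, ← exp_log hn, ← exp_neg, exp_lt_exp]
  rw [div_lt_iff₀ (by positivity)] at hT
  linarith

theorem adaboost_perfect_classification_general {X : Type*} (N T : ℕ)
    (x : Fin N → X) (y : Fin N → ℝ) (hy : ∀ i, y i = 1 ∨ y i = -1)
    (h : Fin T → X → ℝ) (hh : ∀ t x', h t x' = 1 ∨ h t x' = -1)
    (α ε : Fin T → ℝ) (D : ℕ → Fin N → ℝ) (Z : Fin T → ℝ)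
    (γ : ℝ) (hγ0 : 0 < γ)
    (hD0 : ∀ i, D 0 i = 1 / N)
    (hZ : ∀ t : Fin T, Z t = ∑ i, D t.1 i * Real.exp (-(α t * y i * h t (x i))))
    (hrec : ∀ (t : Fin T) (i : Fin N),
      D (t.1 + 1) i = D t.1 i * Real.exp (-(α t * y i * h t (x i))) / Z t)
    (hε : ∀ t : Fin T,
      ε t = ∑ i ∈ Finset.univ.filter (fun i => h t (x i) ≠ y i), D t.1 i)
    (hα : ∀ t, α t = (1 / 2) * Real.log ((1 - ε t) / ε t))
    (hε0 : ∀ t, 0 < ε t) (hε1 : ∀ t, ε t < 1)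
    (hweak : ∀ t, ε t ≤ 1 / 2 - γ)
    (hT : Real.log N / (2 * γ ^ 2) < (T : ℝ)) :
    ∀ i, 0 < y i * ∑ t, α t * h t (x i) := by
  intro i
  have hN : (0 : ℝ) < N := Nat.cast_pos.2 i.pos
  set u : Fin T → Fin N → ℝ := fun t j => α t * y j * h t (x j)
  have hDpos := weight_pos D Z u hZ hrec fun j => by rw [hD0]; positivity
  have hZpos : ∀ t, 0 < Z t := fun t => by
    rw [hZ]
    exact sum_pos (fun j _ => mul_pos (hDpos t t.2.le j) (exp_pos _)) ⟨i, mem_univ i⟩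
  have hDsum := sum_weight_eq_one D Z u hZ hrec (fun t => (hZpos t).ne') <| by
    simp [hD0, hN.ne']
  have hZle : ∀ t, Z t ≤ exp (-(2 * γ ^ 2)) := fun t => by
    rw [hZ, sum_mul_exp_neg_mul_sign_eq _ y (fun j => h t (x j)) hy (fun j => hh t _)
      (hDsum t t.2.le), ← hε, hα,
      one_sub_mul_exp_neg_add_mul_exp_eq_two_mul_sqrt (hε0 t) (hε1 t)]
    exact two_mul_sqrt_mul_one_sub_le_exp hγ0.le (hweak t)
  have hprod : ∏ t, Z t < 1 / N :=
    calc ∏ t, Z t ≤ ∏ _t : Fin T, exp (-(2 * γ ^ 2)) :=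
          prod_le_prod (fun t _ => (hZpos t).le) fun t _ => hZle t
      _ = exp (-(2 * γ ^ 2)) ^ T := by rw [prod_const, card_fin]
      _ < 1 / N := exp_neg_two_mul_sq_pow_lt_one_div hN hγ0 hT
  have hDle : D T i ≤ 1 :=
    hDsum T le_rfl ▸ single_le_sum (fun j _ => (hDpos T le_rfl j).le) (mem_univ i)
  have hunroll := weight_mul_prod_normalizer_eq D Z u (fun t => (hZpos t).ne') hrec i
  rw [hD0] at hunroll
  have hmargin : exp (-∑ t, u t i) < 1 := by
    have hlt : 1 / N * exp (-∑ t, u t i) < 1 / N * 1 := by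
      rw [mul_one, ← hunroll]
      exact (mul_le_of_le_one_left (prod_nonneg fun t _ => (hZpos t).le) hDle).trans_lt hprod
    exact lt_of_mul_lt_mul_left hlt (by positivity)
  rw [mul_sum]
  simpa [u, mul_assoc, mul_left_comm] using exp_lt_one_iff.1 hmargin

/-- Perfect classification after enough rounds: in the AdaBoost setting with a
uniform edge, if every round's weighted error satisfies `ε_t ≤ 1/2 − γ` for a fixed
`γ ∈ (0, 1/2)` (and each `ε_t ∈ (0,1)`), and the number of rounds satisfies
`T > ln(N) / (2γ²)`, then the boosted classifier classifies every training example
correctly: `yᵢ·F(xᵢ) > 0` for all `i`, where `F(x) = Σ_t α_t·h_t(x)`.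
Setting: labels `yᵢ ∈ {−1,+1}`, weak hypotheses `h_t : X → {−1,+1}`, weights
`D_1(i) = 1/N` (indexed so `D 0 = D_1`),
`D_{t+1}(i) = D_t(i)·exp(−α_t·yᵢ·h_t(xᵢ))/Z_t` with
`Z_t = Σᵢ D_t(i)·exp(−α_t·yᵢ·h_t(xᵢ))`, weighted error
`ε_t = Σ_{i : h_t(xᵢ) ≠ yᵢ} D_t(i)`, and `α_t = (1/2)·ln((1−ε_t)/ε_t)`. -/
theorem adaboost_perfect_classification {X : Type*} (N T : ℕ) (hN : 0 < N)
    (x : Fin N → X) (y : Fin N → ℝ) (hy : ∀ i, y i = 1 ∨ y i = -1)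
    (h : Fin T → X → ℝ) (hh : ∀ t x', h t x' = 1 ∨ h t x' = -1)
    (α ε : Fin T → ℝ) (D : ℕ → Fin N → ℝ) (Z : Fin T → ℝ)
    (γ : ℝ) (hγ0 : 0 < γ) (hγ1 : γ < 1 / 2)
    (hD0 : ∀ i, D 0 i = 1 / N)
    (hZ : ∀ t : Fin T, Z t = ∑ i, D t.1 i * Real.exp (-(α t * y i * h t (x i))))
    (hrec : ∀ (t : Fin T) (i : Fin N),
      D (t.1 + 1) i = D t.1 i * Real.exp (-(α t * y i * h t (x i))) / Z t)
    (hε : ∀ t : Fin T,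
      ε t = ∑ i ∈ Finset.univ.filter (fun i => h t (x i) ≠ y i), D t.1 i)
    (hα : ∀ t, α t = (1 / 2) * Real.log ((1 - ε t) / ε t))
    (hε0 : ∀ t, 0 < ε t) (hε1 : ∀ t, ε t < 1)
    (hweak : ∀ t, ε t ≤ 1 / 2 - γ)
    (hT : Real.log N / (2 * γ ^ 2) < (T : ℝ)) :
    ∀ i, 0 < y i * ∑ t, α t * h t (x i) :=
  adaboost_perfect_classification_general N T x y hy h hh α ε D Z γ hγ0 hD0 hZ hrec hε hα hε0 hε1
    hweak hT
end
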